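/- arXiv:math/9901154 — 4 statements merged into one kernel-verified Lean document; each statement's English description precedes it below -/
import Mathlib

section
/- Let n be a positive integer, let γ > 0, μ, a₁, a₂ be real constants, and set α = 2/n, β = (2 − n)/n, a₃ = √(γ/n), κ = a₁²·(1 + 2γμ) and a₄ = −μ·a₁². Then the function u(x,t) = a₂·(cos(a₃·(x − a₁·t)))ⁿ + a₄ solves equation (1) at every point (x,t) ∈ ℝ². -/
/-- `u` solves equation (1), the nonlinear fourth order PDE
`u_tt = (κ u + γ u²)_xx + u u_xxxx + μ u_xxtt + α u_x u_xxx + β (u_xx)²`,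
at the point `(x, t)`. -/
noncomputable def SolvesEq1 (α β γ κ μ : ℝ) (u : ℝ → ℝ → ℝ) (x t : ℝ) : Prop :=
  iteratedDeriv 2 (fun s => u x s) t =
    iteratedDeriv 2 (fun y => κ * u y t + γ * (u y t) ^ 2) x
    + u x t * iteratedDeriv 4 (fun y => u y t) x
    + μ * iteratedDeriv 2 (fun y => iteratedDeriv 2 (fun s => u y s) t) x
    + α * deriv (fun y => u y t) x * iteratedDeriv 3 (fun y => u y t) x
    + β * (iteratedDeriv 2 (fun y => u y t) x) ^ 2

/-!
Writing `u x t = f (x - a₁ * t)`, equation (1) becomes a fourth-order ODE for the profile `f`.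
The shift `-μ * a₁ ^ 2` and the choice of `κ` cancel every term linear in `g = f + μ * a₁ ^ 2`,
leaving `γ (g²)'' + g g'''' + α g' g''' + β (g'')² = 0` for `g z = a₂ * h (c * z)` with
`h = cos ^ n` and `c ^ 2 = γ / n`. The left side is `a₂² c⁴ / n` times the second derivative of
`n h h'' - (n - 1) h'² + n² h²`, and this expression vanishes identically for `h = cos ^ n`.
-/

open Real

section IteratedDeriv

variable {𝕜 : Type*} [NontriviallyNormedField 𝕜]

theorem iteratedDeriv_iteratedDeriv {F : Type*} [NormedAddCommGroup F] [NormedSpace 𝕜 F]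
    (m n : ℕ) (f : 𝕜 → F) :
    iteratedDeriv m (iteratedDeriv n f) = iteratedDeriv (m + n) f := by
  simp only [iteratedDeriv_eq_iterate, Function.iterate_add_apply]

theorem iteratedDeriv_two_fun_mul {𝔸 : Type*} [NormedCommRing 𝔸] [NormedAlgebra 𝕜 𝔸]
    {f g : 𝕜 → 𝔸} {x : 𝕜} (hf : ContDiffAt 𝕜 2 f x)
    (hg : ContDiffAt 𝕜 2 g x) :
    iteratedDeriv 2 (fun y => f y * g y) x =
      iteratedDeriv 2 f x * g x + 2 * (deriv f x * deriv g x) + f x * iteratedDeriv 2 g x := by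
  rw [iteratedDeriv_fun_mul hf hg]
  simp only [Finset.sum_range_succ, Finset.sum_range_zero, iteratedDeriv_zero, iteratedDeriv_one]
  norm_num
  ring

theorem iteratedDeriv_two_const_mul_add_const_mul_sq {f : 𝕜 → 𝕜} {z : 𝕜} (hf : ContDiffAt 𝕜 2 f z)
    (κ γ : 𝕜) :
    iteratedDeriv 2 (fun y => κ * f y + γ * f y ^ 2) z =
      κ * iteratedDeriv 2 f z + 2 * γ * (deriv f z ^ 2 + f z * iteratedDeriv 2 f z) := by
  simp only [sq]
  rw [iteratedDeriv_fun_add (by fun_prop) (by fun_prop), iteratedDeriv_const_mul_field,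
    iteratedDeriv_const_mul_field, iteratedDeriv_two_fun_mul hf hf]
  ring

theorem iteratedDeriv_const_mul_comp_const_mul_add_const {h : 𝕜 → 𝕜} {k : ℕ}
    (hh : ContDiff 𝕜 k h) (hk : 0 < k) (a c d z : 𝕜) :
    iteratedDeriv k (fun y => a * h (c * y) + d) z = a * c ^ k * iteratedDeriv k h (c * z) := by
  rw [show (fun y => a * h (c * y) + d) = fun y => d + a * h (c * y) by ext; ring,
    iteratedDeriv_const_add hk, iteratedDeriv_const_mul_field, iteratedDeriv_comp_const_mul hh]
  ring

theorem iteratedDeriv_comp_const_sub_mul {f : 𝕜 → 𝕜} {k : ℕ} (hf : ContDiff 𝕜 k f) (x a t : 𝕜) :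
    iteratedDeriv k (fun s => f (x - a * s)) t = (-a) ^ k * iteratedDeriv k f (x - a * t) := by
  have hshift : ContDiff 𝕜 k (fun w => f (x + w)) := hf.comp (by fun_prop)
  have := congrFun (iteratedDeriv_comp_const_mul hshift (-a)) t
  simp only [neg_mul, ← sub_eq_add_neg] at this
  rw [this, iteratedDeriv_comp_const_add, sub_eq_add_neg]

end IteratedDeriv

theorem solvesEq1_comp_sub_mul_iff {f : ℝ → ℝ} (hf : ContDiff ℝ 2 f) (α β γ κ μ a x t : ℝ) :
    SolvesEq1 α β γ κ μ (fun x t => f (x - a * t)) x t ↔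
      a ^ 2 * iteratedDeriv 2 f (x - a * t) =
        iteratedDeriv 2 (fun z => κ * f z + γ * f z ^ 2) (x - a * t)
        + f (x - a * t) * iteratedDeriv 4 f (x - a * t)
        + μ * (a ^ 2 * iteratedDeriv 4 f (x - a * t))
        + α * deriv f (x - a * t) * iteratedDeriv 3 f (x - a * t)
        + β * iteratedDeriv 2 f (x - a * t) ^ 2 := by
  simp only [SolvesEq1, iteratedDeriv_comp_const_sub_mul hf, neg_sq, iteratedDeriv_const_mul_field,
    deriv_comp_sub_const, iteratedDeriv_comp_sub_const, iteratedDeriv_iteratedDeriv]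
  rw [iteratedDeriv_comp_sub_const 2 (fun z => κ * f z + γ * f z ^ 2)]

noncomputable def cosPowResidual (p : ℝ) (h : ℝ → ℝ) (z : ℝ) : ℝ :=
  p * (h z * iteratedDeriv 2 h z) - (p - 1) * (deriv h z * deriv h z) + p ^ 2 * (h z * h z)

theorem cosPowResidual_cos_pow (n : ℕ) : cosPowResidual n (fun z => cos z ^ n) = 0 := by
  have hd : deriv (fun z => cos z ^ n) = fun z => -(n * (cos z ^ (n - 1) * sin z)) :=
    funext fun z => by rw [((hasDerivAt_cos z).fun_pow n).deriv]; ring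
  funext z
  have hd2 : iteratedDeriv 2 (fun z => cos z ^ n) z =
      -(n * ((n - 1 : ℕ) * cos z ^ (n - 1 - 1) * -sin z * sin z + cos z ^ (n - 1) * cos z)) := by
    rw [iteratedDeriv_succ, iteratedDeriv_one, hd]
    exact ((((hasDerivAt_cos z).pow (n - 1)).mul (hasDerivAt_sin z)).const_mul _).neg.deriv
  rw [cosPowResidual, hd2, hd, Pi.zero_apply]
  rcases n with _ | _ | m
  · simp
  · simp
  · simp only [add_tsub_cancel_right]
    push_cast
    ring

theorem iteratedDeriv_two_cosPowResidual (p : ℝ) {h : ℝ → ℝ} (hh : ContDiff ℝ 4 h) (z : ℝ) :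
    iteratedDeriv 2 (cosPowResidual p h) z =
      p * h z * iteratedDeriv 4 h z + 2 * deriv h z * iteratedDeriv 3 h z
        + (2 - p) * iteratedDeriv 2 h z ^ 2
        + 2 * p ^ 2 * (deriv h z ^ 2 + h z * iteratedDeriv 2 h z) := by
  have h0 : ContDiff ℝ 2 h := hh.of_le (by norm_num)
  have h1 : ContDiff ℝ 2 (deriv h) := by
    simpa [iteratedDeriv_one] using (hh.of_le (by norm_num)).iterate_deriv' 2 1
  have h2 : ContDiff ℝ 2 (iteratedDeriv 2 h) := by
    simpa [iteratedDeriv_eq_iterate] using (hh.of_le (by norm_num)).iterate_deriv' 2 2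
  unfold cosPowResidual
  rw [iteratedDeriv_fun_add, iteratedDeriv_fun_sub, iteratedDeriv_const_mul_field,
    iteratedDeriv_const_mul_field, iteratedDeriv_const_mul_field,
    iteratedDeriv_two_fun_mul, iteratedDeriv_two_fun_mul, iteratedDeriv_two_fun_mul]
  · simp only [iteratedDeriv_eq_iterate, Function.iterate_succ_apply', Function.iterate_zero_apply]
    ring
  all_goals fun_prop

theorem fourth_order_identity_of_cosPowResidual_eq_zero {p : ℝ} {h : ℝ → ℝ}
    (hh : ContDiff ℝ 4 h) (hres : cosPowResidual p h = 0) (z : ℝ) :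
    p * h z * iteratedDeriv 4 h z + 2 * deriv h z * iteratedDeriv 3 h z
        + (2 - p) * iteratedDeriv 2 h z ^ 2
        + 2 * p ^ 2 * (deriv h z ^ 2 + h z * iteratedDeriv 2 h z) = 0 := by
  rw [← iteratedDeriv_two_cosPowResidual p hh, hres]
  simp

theorem cosn_compacton_profile_solves_eq1 (n : ℕ) (hn : 0 < n)
    (γ μ a₁ a₂ : ℝ) (hγ : 0 < γ) :
    ∀ x t : ℝ,
      SolvesEq1 (2 / (n : ℝ)) ((2 - (n : ℝ)) / (n : ℝ)) γ
        (a₁ ^ 2 * (1 + 2 * γ * μ)) μ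
        (fun x t =>
          a₂ * (Real.cos (Real.sqrt (γ / (n : ℝ)) * (x - a₁ * t))) ^ n
            + (-μ * a₁ ^ 2)) x t := by
  intro x t
  set c := √(γ / n)
  have hn0 : (n : ℝ) ≠ 0 := by positivity
  have hγc : γ = n * c ^ 2 := by
    rw [sq_sqrt (by positivity)]
    field_simp
  have hh : ∀ k : ℕ, ContDiff ℝ k (fun z => cos z ^ n) := fun k => contDiff_cos.pow n
  have hf : ContDiff ℝ 2 (fun z => a₂ * cos (c * z) ^ n + -μ * a₁ ^ 2) := by fun_prop
  rw [solvesEq1_comp_sub_mul_iff hf, iteratedDeriv_two_const_mul_add_const_mul_sq hf.contDiffAt,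
    ← iteratedDeriv_one, iteratedDeriv_const_mul_comp_const_mul_add_const (hh 1) one_pos,
    iteratedDeriv_const_mul_comp_const_mul_add_const (hh 2) two_pos,
    iteratedDeriv_const_mul_comp_const_mul_add_const (hh 3) three_pos,
    iteratedDeriv_const_mul_comp_const_mul_add_const (hh 4) four_pos]
  set w := c * (x - a₁ * t)
  set h := fun z => cos z ^ n
  have key := fourth_order_identity_of_cosPowResidual_eq_zero (hh 4) (cosPowResidual_cos_pow n) w
  rw [← iteratedDeriv_one] at key
  linear_combination (norm := skip) -(a₂ ^ 2 * c ^ 4 / n) * key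
    - 2 * a₂ ^ 2 * c ^ 2 * (iteratedDeriv 1 h w ^ 2 + h w * iteratedDeriv 2 h w) * hγc
  field_simp
  ring
end

section
/- Let α, β, γ, c₁ be real constants and set κ = 0 and μ = 0. Let ψ : ℝ → ℝ be twice continuously differentiable with ψ″(t) = 6c₁·ψ(t)² for all t (as holds for any solution of (ψ′)² = 4c₁ψ³ + c₂), and let w : ℝ → ℝ be four times continuously differentiable and satisfy w·w⁗ + α·w′·w‴ + β·(w″)² + 2γ·(w·w″ + (w′)²) − 6c₁·w = 0 on ℝ. Then the function u(x,t) = w(x)·ψ(t) solves equation (1) at every point (x,t) ∈ ℝ². -/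
/-!
For `u(x,t) = w(x) ψ(t)` every `x`-derivative of `u` is the corresponding derivative of `w`
times `ψ(t)`, and every `t`-derivative the corresponding derivative of `ψ` times `w(x)`.
Using `ψ'' = 6 c₁ ψ²`, both sides of equation (1) with `κ = μ = 0` become multiples of `ψ(t)²`,
and their difference is `ψ(t)²` times the left-hand side of the ODE for `w`.
-/

theorem iteratedDeriv_two_sq {𝕜 : Type*} [NontriviallyNormedField 𝕜] {f : 𝕜 → 𝕜} {x : 𝕜}
    (hf : ContDiffAt 𝕜 2 f x) :
    iteratedDeriv 2 (fun y => f y ^ 2) x = 2 * (deriv f x ^ 2 + f x * iteratedDeriv 2 f x) := by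
  simp only [sq, iteratedDeriv_fun_mul hf hf, Finset.sum_range_succ, Finset.sum_range_zero,
    iteratedDeriv_zero, iteratedDeriv_one]
  norm_num
  ring

theorem separable_reduction_mu_zero_solves_eq1_general (α β γ c₁ : ℝ)
    (ψ w : ℝ → ℝ)
    (hψeq : ∀ t : ℝ, iteratedDeriv 2 ψ t = 6 * c₁ * (ψ t) ^ 2)
    (hw : ContDiff ℝ 4 w)
    (hODE : ∀ z : ℝ,
      w z * iteratedDeriv 4 w z
        + α * deriv w z * iteratedDeriv 3 w z
        + β * (iteratedDeriv 2 w z) ^ 2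
        + 2 * γ * (w z * iteratedDeriv 2 w z + (deriv w z) ^ 2)
        - 6 * c₁ * w z = 0) :
    ∀ x t : ℝ, SolvesEq1 α β γ 0 0 (fun x t => w x * ψ t) x t := by
  intro x t
  have h_nonlinear : iteratedDeriv 2 (fun y => 0 * (w y * ψ t) + γ * (w y * ψ t) ^ 2) x
      = γ * ψ t ^ 2 * (2 * (deriv w x ^ 2 + w x * iteratedDeriv 2 w x)) := by
    rw [show (fun y => 0 * (w y * ψ t) + γ * (w y * ψ t) ^ 2) = fun y => γ * ψ t ^ 2 * w y ^ 2 by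
        funext y; ring,
      iteratedDeriv_const_mul_field, iteratedDeriv_two_sq (hw.contDiffAt.of_le (by norm_num))]
  rw [SolvesEq1, h_nonlinear]
  simp only [iteratedDeriv_const_mul_field, iteratedDeriv_mul_const_field, deriv_mul_const_field,
    hψeq, zero_mul, add_zero]
  linear_combination -ψ t ^ 2 * hODE x

theorem separable_reduction_mu_zero_solves_eq1 (α β γ c₁ : ℝ)
    (ψ w : ℝ → ℝ) (hψ : ContDiff ℝ 2 ψ)
    (hψeq : ∀ t : ℝ, iteratedDeriv 2 ψ t = 6 * c₁ * (ψ t) ^ 2)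
    (hw : ContDiff ℝ 4 w)
    (hODE : ∀ z : ℝ,
      w z * iteratedDeriv 4 w z
        + α * deriv w z * iteratedDeriv 3 w z
        + β * (iteratedDeriv 2 w z) ^ 2
        + 2 * γ * (w z * iteratedDeriv 2 w z + (deriv w z) ^ 2)
        - 6 * c₁ * w z = 0) :
    ∀ x t : ℝ, SolvesEq1 α β γ 0 0 (fun x t => w x * ψ t) x t :=
  separable_reduction_mu_zero_solves_eq1_general α β γ c₁ ψ w hψeq hw hODE
end

section
/- Let α, β, γ, c₁ be real constants and set κ = 0 and μ = 1. Let ψ : ℝ → ℝ be twice continuously differentiable with ψ″(t) = 6c₁·ψ(t)² for all t (as holds for any solution of (ψ′)² = 4c₁ψ³ + c₂), and let w : ℝ → ℝ be four times continuously differentiable and satisfy w·w⁗ + α·w′·w‴ + β·(w″)² + 2γ·(w·w″ + (w′)²) + 6c₁·(w″ − w) = 0 on ℝ. Then the function u(x,t) = w(x)·ψ(t) solves equation (1) at every point (x,t) ∈ ℝ². -/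
theorem iteratedDeriv_two_fun_sq {𝕜 : Type*} [NontriviallyNormedField 𝕜] {f : 𝕜 → 𝕜}
    (hf : ContDiff 𝕜 2 f) (x : 𝕜) :
    iteratedDeriv 2 (fun y => f y ^ 2) x = 2 * (f x * iteratedDeriv 2 f x + deriv f x ^ 2) := by
  have hf' : Differentiable 𝕜 f := hf.differentiable (by norm_num)
  have hf'' : Differentiable 𝕜 (deriv f) :=
    (hf.deriv' (n := 1)).differentiable one_ne_zero
  have hderiv : deriv (fun y => f y ^ 2) = fun y => 2 * (f y * deriv f y) := by
    funext y
    rw [deriv_fun_pow (hf' y)]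
    ring
  rw [iteratedDeriv_succ, iteratedDeriv_one, hderiv, iteratedDeriv_succ, iteratedDeriv_one,
    deriv_const_mul_field, deriv_fun_mul (hf' x) (hf'' x)]
  ring

theorem solvesEq1_mul_iff {α β γ μ c : ℝ} {w ψ : ℝ → ℝ} (hw : ContDiff ℝ 2 w)
    (hψ : ∀ t, iteratedDeriv 2 ψ t = c * ψ t ^ 2) (x t : ℝ) :
    SolvesEq1 α β γ 0 μ (fun x t => w x * ψ t) x t ↔
      ψ t ^ 2 * (w x * iteratedDeriv 4 w x + α * deriv w x * iteratedDeriv 3 w x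
        + β * iteratedDeriv 2 w x ^ 2 + 2 * γ * (w x * iteratedDeriv 2 w x + deriv w x ^ 2)
        + c * (μ * iteratedDeriv 2 w x - w x)) = 0 := by
  have hquad : (fun y => 0 * (w y * ψ t) + γ * (w y * ψ t) ^ 2) =
      fun y => γ * ψ t ^ 2 * w y ^ 2 := by
    funext y
    ring
  have htime : ∀ y, iteratedDeriv 2 (fun s => w y * ψ s) t = w y * (c * ψ t ^ 2) := fun y => by
    rw [iteratedDeriv_const_mul_field, hψ]
  simp only [SolvesEq1, hquad, htime, iteratedDeriv_const_mul_field, iteratedDeriv_mul_const_field,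
    iteratedDeriv_two_fun_sq hw, deriv_mul_const_field]
  rw [eq_comm, ← sub_eq_zero]
  exact iff_of_eq (congrArg (· = 0) (by ring))

theorem separable_reduction_mu_one_solves_eq1_general (α β γ c₁ : ℝ)
    (ψ w : ℝ → ℝ)
    (hψeq : ∀ t : ℝ, iteratedDeriv 2 ψ t = 6 * c₁ * (ψ t) ^ 2)
    (hw : ContDiff ℝ 4 w)
    (hODE : ∀ z : ℝ,
      w z * iteratedDeriv 4 w z
        + α * deriv w z * iteratedDeriv 3 w z
        + β * (iteratedDeriv 2 w z) ^ 2
        + 2 * γ * (w z * iteratedDeriv 2 w z + (deriv w z) ^ 2)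
        + 6 * c₁ * (iteratedDeriv 2 w z - w z) = 0) :
    ∀ x t : ℝ, SolvesEq1 α β γ 0 1 (fun x t => w x * ψ t) x t := by
  intro x t
  rw [solvesEq1_mul_iff (hw.of_le (by norm_num)) hψeq, one_mul, hODE x, mul_zero]

theorem separable_reduction_mu_one_solves_eq1 (α β γ c₁ : ℝ)
    (ψ w : ℝ → ℝ) (hψ : ContDiff ℝ 2 ψ)
    (hψeq : ∀ t : ℝ, iteratedDeriv 2 ψ t = 6 * c₁ * (ψ t) ^ 2)
    (hw : ContDiff ℝ 4 w)
    (hODE : ∀ z : ℝ,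
      w z * iteratedDeriv 4 w z
        + α * deriv w z * iteratedDeriv 3 w z
        + β * (iteratedDeriv 2 w z) ^ 2
        + 2 * γ * (w z * iteratedDeriv 2 w z + (deriv w z) ^ 2)
        + 6 * c₁ * (iteratedDeriv 2 w z - w z) = 0) :
    ∀ x t : ℝ, SolvesEq1 α β γ 0 1 (fun x t => w x * ψ t) x t :=
  separable_reduction_mu_one_solves_eq1_general α β γ c₁ ψ w hψeq hw hODE
end

section
/- Set γ = −1/2, α = 1, β = 0, κ = 0 and μ = 1, and let c₁, c₂ be real constants. Then for arbitrary twice continuously differentiable functions w, A, B : ℝ → ℝ, the function u(x,t) = w(t)·cosh(x + A(t)) + B(t)·sinh(x + A(t)) + c₁·t + c₂ solves equation (1) at every point (x,t) ∈ ℝ². -/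
open Real

noncomputable def hypCombo (a b c y : ℝ) : ℝ := a * cosh (y + c) + b * sinh (y + c)

theorem hasDerivAt_hypCombo (a b c y : ℝ) :
    HasDerivAt (hypCombo a b c) (hypCombo b a c y) y := by
  have hc := (hasDerivAt_cosh (y + c)).comp y ((hasDerivAt_id' y).add_const c)
  have hs := (hasDerivAt_sinh (y + c)).comp y ((hasDerivAt_id' y).add_const c)
  exact ((hc.const_mul a).add (hs.const_mul b)).congr_deriv (by simp only [hypCombo]; ring)

theorem deriv_hypCombo (a b c : ℝ) : deriv (hypCombo a b c) = hypCombo b a c :=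
  funext fun y => (hasDerivAt_hypCombo a b c y).deriv

theorem deriv_hypCombo_add_const (a b c k : ℝ) :
    deriv (fun y => hypCombo a b c y + k) = hypCombo b a c := by
  rw [deriv_add_const', deriv_hypCombo]

theorem iteratedDeriv_add_two_hypCombo (n : ℕ) (a b c : ℝ) :
    iteratedDeriv (n + 2) (hypCombo a b c) = iteratedDeriv n (hypCombo a b c) := by
  simp only [iteratedDeriv_succ', deriv_hypCombo]

theorem iteratedDeriv_succ_hypCombo_add_const (n : ℕ) (a b c k : ℝ) :
    iteratedDeriv (n + 1) (fun y => hypCombo a b c y + k) = iteratedDeriv n (hypCombo b a c) := by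
  rw [iteratedDeriv_succ', deriv_hypCombo_add_const]

theorem contDiff_hypCombo {n : WithTop ℕ∞} (a b c : ℝ) : ContDiff ℝ n (hypCombo a b c) := by
  unfold hypCombo
  fun_prop

theorem HasDerivAt.hypCombo {a b c : ℝ → ℝ} {a' b' c' s : ℝ} (x : ℝ)
    (ha : HasDerivAt a a' s) (hb : HasDerivAt b b' s) (hc : HasDerivAt c c' s) :
    HasDerivAt (fun s => hypCombo (a s) (b s) (c s) x)
      (hypCombo (a' + b s * c') (b' + a s * c') (c s) x) s := by
  have hcosh := (hasDerivAt_cosh (x + c s)).comp s (hc.const_add x)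
  have hsinh := (hasDerivAt_sinh (x + c s)).comp s (hc.const_add x)
  exact ((ha.mul hcosh).add (hb.mul hsinh)).congr_deriv
    (by simp only [_root_.hypCombo, Function.comp_apply]; ring)

theorem deriv_hypCombo_param {a b c : ℝ → ℝ} (ha : Differentiable ℝ a) (hb : Differentiable ℝ b)
    (hc : Differentiable ℝ c) (x : ℝ) :
    deriv (fun s => hypCombo (a s) (b s) (c s) x) =
      fun s => hypCombo (deriv a s + b s * deriv c s) (deriv b s + a s * deriv c s) (c s) x :=
  funext fun s => ((ha s).hasDerivAt.hypCombo x (hb s).hasDerivAt (hc s).hasDerivAt).deriv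

theorem iteratedDeriv_two_hypCombo_param_add_linear {w A B : ℝ → ℝ}
    (hw : ContDiff ℝ 2 w) (hA : ContDiff ℝ 2 A) (hB : ContDiff ℝ 2 B) (k₁ k₀ t : ℝ) :
    ∃ p q : ℝ, ∀ x, iteratedDeriv 2 (fun s => hypCombo (w s) (B s) (A s) x + k₁ * s + k₀) t =
      hypCombo p q (A t) x := by
  have hw₁ : Differentiable ℝ w := hw.differentiable (by norm_num)
  have hA₁ : Differentiable ℝ A := hA.differentiable (by norm_num)
  have hB₁ : Differentiable ℝ B := hB.differentiable (by norm_num)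
  set p := fun s => deriv w s + B s * deriv A s
  set q := fun s => deriv B s + w s * deriv A s
  have hp : Differentiable ℝ p :=
    hw.differentiable_deriv_two.add (hB₁.mul hA.differentiable_deriv_two)
  have hq : Differentiable ℝ q :=
    hB.differentiable_deriv_two.add (hw₁.mul hA.differentiable_deriv_two)
  refine ⟨deriv p t + q t * deriv A t, deriv q t + p t * deriv A t, fun x => ?_⟩
  have hderiv : deriv (fun s => hypCombo (w s) (B s) (A s) x + k₁ * s + k₀) =
      fun s => hypCombo (p s) (q s) (A s) x + k₁ := by
    funext s
    exact ((((hw₁ s).hasDerivAt.hypCombo x (hB₁ s).hasDerivAt (hA₁ s).hasDerivAt).add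
      ((hasDerivAt_id' s).const_mul k₁)).add_const k₀).deriv.trans (by rw [mul_one])
  rw [iteratedDeriv_succ', iteratedDeriv_one, hderiv, deriv_add_const,
    deriv_hypCombo_param hp hq hA₁]

theorem iteratedDeriv_two_linear_add_sq {f : ℝ → ℝ} (hf : ContDiff ℝ 2 f) (κ γ x : ℝ) :
    iteratedDeriv 2 (fun y => κ * f y + γ * f y ^ 2) x =
      κ * iteratedDeriv 2 f x + 2 * γ * (deriv f x ^ 2 + f x * iteratedDeriv 2 f x) := by
  have hf₁ : Differentiable ℝ f := hf.differentiable (by norm_num)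
  have hf₂ : Differentiable ℝ (deriv f) := hf.differentiable_deriv_two
  have hderiv : deriv (fun y => κ * f y + γ * f y ^ 2) =
      fun y => κ * deriv f y + 2 * γ * (f y * deriv f y) := by
    funext y
    have h := (hf₁ y).hasDerivAt
    exact ((h.const_mul κ).add ((h.pow 2).const_mul γ)).deriv.trans (by push_cast; ring)
  have h₁ := (hf₁ x).hasDerivAt
  have h₂ := (hf₂ x).hasDerivAt
  rw [iteratedDeriv_succ', iteratedDeriv_one, hderiv, iteratedDeriv_succ', iteratedDeriv_one]
  exact ((h₂.const_mul κ).add ((h₁.mul h₂).const_mul (2 * γ))).deriv.trans (by ring)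

theorem solvesEq1_of_slice_eq_hypCombo_add_const {u : ℝ → ℝ → ℝ} {x t a b c k p q c' : ℝ}
    (hslice : ∀ y, u y t = hypCombo a b c y + k)
    (htt : ∀ y, iteratedDeriv 2 (fun s => u y s) t = hypCombo p q c' y) :
    SolvesEq1 1 0 (-1 / 2) 0 1 u x t := by
  have hsmooth : ContDiff ℝ 2 (fun y => hypCombo a b c y + k) :=
    (contDiff_hypCombo a b c).add contDiff_const
  have hquad := iteratedDeriv_two_linear_add_sq hsmooth 0 (-1 / 2) x
  beta_reduce at hquad
  unfold SolvesEq1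
  simp only [hslice, htt, hquad, iteratedDeriv_succ_hypCombo_add_const,
    iteratedDeriv_add_two_hypCombo, iteratedDeriv_zero, iteratedDeriv_one, deriv_hypCombo,
    deriv_hypCombo_add_const]
  ring

theorem singular_nonclassical_case_a_solves_eq1 (c₁ c₂ : ℝ)
    (w A B : ℝ → ℝ)
    (hw : ContDiff ℝ 2 w) (hA : ContDiff ℝ 2 A) (hB : ContDiff ℝ 2 B) :
    ∀ x t : ℝ,
      SolvesEq1 1 0 (-1 / 2) 0 1
        (fun x t =>
          w t * Real.cosh (x + A t) + B t * Real.sinh (x + A t)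
            + c₁ * t + c₂) x t := by
  intro x t
  obtain ⟨p, q, htt⟩ := iteratedDeriv_two_hypCombo_param_add_linear hw hA hB c₁ c₂ t
  exact solvesEq1_of_slice_eq_hypCombo_add_const (a := w t) (b := B t) (c := A t)
    (k := c₁ * t + c₂) (fun y => by simp only [hypCombo]; ring) htt
end
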